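/- arXiv:2101.00498 — 3 statements merged into one kernel-verified Lean document; each statement's English description precedes it below -/
import Mathlib

section
/- Let X be a compact metric space, f : X → X a homeomorphism, and c > 0. If f is nonstandard expansive with constant c (i.e. for all distinct x, y ∈ X, the set {n ∈ ℤ : d(fⁿ(x), fⁿ(y)) > c} is infinite), then for every positive natural number k, f^k is nonstandard expansive with some constant c' > 0 (i.e. for all distinct x, y ∈ X, the set {m ∈ ℤ : d(f^{mk}(x), f^{mk}(y)) > c'} is infinite). -/
/-!
Uniform continuity of the finitely many maps `f ^ j`, `0 ≤ j < k`, on the compact space gives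
`δ > 0` such that `δ`-closeness at time `m k` forces `c`-closeness at all times `m k + j`,
`0 ≤ j < k`. Hence every `n` with `d(fⁿ x, fⁿ y) > c` has `m = n / k` with
`d(f^{mk} x, f^{mk} y) > δ / 2`, and since each `m` arises from at most `k` values of `n`,
infinitely many such `n` give infinitely many such `m`.
-/

theorem Int.finite_preimage_ediv {k : ℤ} (hk : 0 < k) {T : Set ℤ} (hT : T.Finite) :
    ((· / k) ⁻¹' T).Finite :=
  hT.preimage' fun m _ => (Set.finite_Ico (m * k) (m * k + k)).subset fun n hn => by
    subst hn
    exact ⟨Int.ediv_mul_le n hk.ne', by linarith [Int.lt_ediv_add_one_mul_self n hk]⟩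

theorem exists_pos_forall_dist_lt_of_uniformContinuous {ι X Y : Type*} [Fintype ι]
    [PseudoMetricSpace X] [PseudoMetricSpace Y] {g : ι → X → Y}
    (hg : ∀ i, UniformContinuous (g i)) {ε : ℝ} (hε : 0 < ε) :
    ∃ δ > 0, ∀ a b, dist a b < δ → ∀ i, dist (g i a) (g i b) < ε := by
  obtain ⟨δ, hδ, h⟩ := Metric.uniformContinuous_iff.mp (uniformContinuous_pi.mpr hg) ε hε
  exact ⟨δ, hδ, fun a b hab i => (dist_le_pi_dist _ _ i).trans_lt (h hab)⟩

namespace Equiv.Perm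

theorem continuous_zpow_of_nonneg {X : Type*} [TopologicalSpace X] {f : Perm X}
    (hf : Continuous f) {j : ℤ} (hj : 0 ≤ j) : Continuous ⇑(f ^ j) := by
  lift j to ℕ using hj
  rw [zpow_natCast, coe_pow]
  exact hf.iterate j

theorem setOf_lt_dist_zpow_subset_preimage_ediv {X : Type*} [PseudoMetricSpace X]
    (f : Perm X) {k : ℤ} (hk : 0 < k) {c δ : ℝ}
    (hδ : ∀ a b, dist a b ≤ δ → ∀ j ∈ Set.Ico 0 k, dist ((f ^ j) a) ((f ^ j) b) ≤ c)
    (x y : X) :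
    {n : ℤ | dist ((f ^ n) x) ((f ^ n) y) > c} ⊆
      (· / k) ⁻¹' {m : ℤ | dist ((f ^ (m * k)) x) ((f ^ (m * k)) y) > δ} := by
  intro n hn
  by_contra hclose
  simp only [Set.mem_preimage, Set.mem_ofPred_eq, not_lt] at hn hclose
  have hsplit : ∀ z, (f ^ (n % k)) ((f ^ (n / k * k)) z) = (f ^ n) z := fun z => by
    rw [← mul_apply, ← zpow_add, Int.emod_add_ediv_mul]
  have hmod : n % k ∈ Set.Ico 0 k := ⟨Int.emod_nonneg n hk.ne', Int.emod_lt_of_pos n hk⟩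
  have := hδ _ _ hclose _ hmod
  rw [hsplit, hsplit] at this
  linarith

end Equiv.Perm

theorem stmt_4_general {X : Type*} [MetricSpace X] [CompactSpace X]
    (f : X ≃ X) (hf : Continuous f)
    (c : ℝ) (hc : 0 < c)
    (h : ∀ x y : X, x ≠ y → {n : ℤ | dist ((f ^ n) x) ((f ^ n) y) > c}.Infinite)
    (k : ℕ) (hk : 0 < k) :
    ∃ c' > 0, ∀ x y : X, x ≠ y →
      {m : ℤ | dist ((f ^ (m * (k : ℤ))) x) ((f ^ (m * (k : ℤ))) y) > c'}.Infinite := by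
  have hk' : (0 : ℤ) < k := by exact_mod_cast hk
  obtain ⟨δ, hδ, hclose⟩ := exists_pos_forall_dist_lt_of_uniformContinuous
    (g := fun j : Set.Ico (0 : ℤ) k => ⇑(f ^ (j : ℤ)))
    (fun j => CompactSpace.uniformContinuous_of_continuous
      (Equiv.Perm.continuous_zpow_of_nonneg hf j.2.1)) hc
  refine ⟨δ / 2, half_pos hδ, fun x y hxy hfin => h x y hxy ?_⟩
  refine (Int.finite_preimage_ediv hk' hfin).subset ?_
  exact Equiv.Perm.setOf_lt_dist_zpow_subset_preimage_ediv f hk'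
    (fun a b hab j hj => (hclose a b (by linarith) ⟨j, hj⟩).le) x y

theorem stmt_4 {X : Type*} [MetricSpace X] [CompactSpace X]
    (f : X ≃ X) (hf : Continuous f) (hf' : Continuous f.symm)
    (c : ℝ) (hc : 0 < c)
    (h : ∀ x y : X, x ≠ y → {n : ℤ | dist ((f ^ n) x) ((f ^ n) y) > c}.Infinite)
    (k : ℕ) (hk : 0 < k) :
    ∃ c' > 0, ∀ x y : X, x ≠ y →
      {m : ℤ | dist ((f ^ (m * (k : ℤ))) x) ((f ^ (m * (k : ℤ))) y) > c'}.Infinite :=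
  stmt_4_general f hf c hc h k hk
end

section
/- Let X be a compact metric space and f : X → X a c-expansive homeomorphism such that no pair of distinct points x, y ∈ X is doubly asymptotic (i.e., it is never the case that d(fⁿ(x), fⁿ(y)) → 0 both as n → +∞ and as n → -∞). Then there exists c' > 0 such that for all distinct x, y ∈ X, the set {n ∈ ℤ : d(fⁿ(x), fⁿ(y)) > c'} is infinite. In fact one may take c' = c/2. -/
open Filter Topology

/-! If the orbit distance of `x` and `y` stayed at most `c/2` from some time on, every cluster
point `(p, q)` of a subsequence along which it stays `≥ ε` would satisfy
`dist (fⁿ p) (fⁿ q) ≤ c/2` for all `n`, by continuity of each `fⁿ`; so `p = q` by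
expansivity, which contradicts `dist p q ≥ ε`. Hence the orbits are forward asymptotic, and
symmetrically (for `f⁻¹`) backward asymptotic, contradicting the absence of doubly asymptotic
pairs. -/

namespace Equiv.Perm

variable {X : Type*}

theorem continuous_zpow [TopologicalSpace X] {f : Equiv.Perm X} (hf : Continuous f)
    (hf' : Continuous f.symm) (n : ℤ) : Continuous ⇑(f ^ n) := by
  induction n using Int.induction_on with
  | zero => exact continuous_id
  | succ k ih => rw [zpow_add_one, coe_mul]; exact ih.comp hf
  | pred k ih => rw [zpow_sub_one, coe_mul]; exact ih.comp hf'

variable [MetricSpace X] [CompactSpace X] {f : Equiv.Perm X}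

theorem tendsto_dist_zpow_atTop_of_eventually_le (hcont : ∀ n : ℤ, Continuous ⇑(f ^ n))
    {c : ℝ} (hexp : ∀ x y : X, x ≠ y → ∃ n : ℤ, dist ((f ^ n) x) ((f ^ n) y) > c) {x y : X}
    (hle : ∀ᶠ n : ℤ in atTop, dist ((f ^ n) x) ((f ^ n) y) ≤ c) :
    Tendsto (fun n : ℤ => dist ((f ^ n) x) ((f ^ n) y)) atTop (𝓝 0) := by
  by_contra hnot
  obtain ⟨ε, hε, hfar⟩ : ∃ ε > 0, ∃ᶠ n : ℤ in atTop, ε ≤ dist ((f ^ n) x) ((f ^ n) y) := by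
    by_contra! hnear
    exact hnot (tendsto_order.2
      ⟨fun a ha => Eventually.of_forall fun n => ha.trans_le dist_nonneg, hnear⟩)
  let orbit : ℤ → X × X := fun n => ((f ^ n) x, (f ^ n) y)
  have hclosed : IsClosed {w : X × X | ε ≤ dist w.1 w.2} :=
    isClosed_le continuous_const (continuous_fst.dist continuous_snd)
  obtain ⟨p, hp, hcluster⟩ :=
    hclosed.isCompact.exists_mapClusterPt_of_frequently (f := orbit) hfar
  have hpq : p.1 ≠ p.2 := dist_pos.1 (hε.trans_le hp)
  obtain ⟨m, hm⟩ := hexp p.1 p.2 hpq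
  have hm_le : dist ((f ^ m) p.1) ((f ^ m) p.2) ≤ c := by
    refine IsClosed.mem_of_mapClusterPt (s := {w : X × X | dist ((f ^ m) w.1) ((f ^ m) w.2) ≤ c})
      (isClosed_le (((hcont m).comp continuous_fst).dist ((hcont m).comp continuous_snd))
        continuous_const) hcluster ?_
    filter_upwards [(tendsto_atTop_add_const_left atTop m tendsto_id).eventually hle] with n hn
    simpa only [Set.mem_ofPred_eq, orbit, id, ← mul_apply, ← zpow_add] using hn
  exact hm.not_ge hm_le

theorem tendsto_dist_zpow_atBot_of_eventually_le (hcont : ∀ n : ℤ, Continuous ⇑(f ^ n))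
    {c : ℝ} (hexp : ∀ x y : X, x ≠ y → ∃ n : ℤ, dist ((f ^ n) x) ((f ^ n) y) > c) {x y : X}
    (hle : ∀ᶠ n : ℤ in atBot, dist ((f ^ n) x) ((f ^ n) y) ≤ c) :
    Tendsto (fun n : ℤ => dist ((f ^ n) x) ((f ^ n) y)) atBot (𝓝 0) := by
  have hinv : ∀ n : ℤ, f⁻¹ ^ n = f ^ (-n) := fun n => inv_zpow' f n
  have hTop : Tendsto (fun n : ℤ => dist ((f⁻¹ ^ n) x) ((f⁻¹ ^ n) y)) atTop (𝓝 0) := by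
    refine tendsto_dist_zpow_atTop_of_eventually_le (c := c) (fun n => hinv n ▸ hcont (-n)) ?_ ?_
    · intro u v huv
      obtain ⟨n, hn⟩ := hexp u v huv
      exact ⟨-n, by simpa only [hinv, neg_neg] using hn⟩
    · simpa only [hinv] using tendsto_neg_atTop_atBot.eventually hle
  simpa only [Function.comp_def, hinv, neg_neg] using hTop.comp tendsto_neg_atBot_atTop

end Equiv.Perm

theorem stmt_7 {X : Type*} [MetricSpace X] [CompactSpace X]
    (f : X ≃ X) (hf : Continuous f) (hf' : Continuous f.symm)
    (c : ℝ) (hc : 0 < c)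
    (hexp : ∀ x y : X, x ≠ y → ∃ n : ℤ, dist ((f ^ n) x) ((f ^ n) y) > c)
    (hnd : ∀ x y : X, x ≠ y →
      ¬ (Tendsto (fun n : ℤ => dist ((f ^ n) x) ((f ^ n) y)) atTop (𝓝 0) ∧
         Tendsto (fun n : ℤ => dist ((f ^ n) x) ((f ^ n) y)) atBot (𝓝 0))) :
    ∀ x y : X, x ≠ y →
      {n : ℤ | dist ((f ^ n) x) ((f ^ n) y) > c / 2}.Infinite := by
  intro x y hxy hfin
  have hcont := Equiv.Perm.continuous_zpow hf hf'
  have hle : ∀ᶠ n : ℤ in cofinite, dist ((f ^ n) x) ((f ^ n) y) ≤ c :=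
    hfin.eventually_cofinite_notMem.mono fun n (hn : ¬ _ > c / 2) =>
      (not_lt.1 hn).trans (half_le_self hc.le)
  rw [Int.cofinite_eq, eventually_sup] at hle
  exact hnd x y hxy
    ⟨Equiv.Perm.tendsto_dist_zpow_atTop_of_eventually_le hcont hexp hle.2,
      Equiv.Perm.tendsto_dist_zpow_atBot_of_eventually_le hcont hexp hle.1⟩
end

section
/- Let X be a compact metric space, f : X → X a homeomorphism, and c > 0 such that for all distinct x, y ∈ X the set {n ∈ ℤ : d(fⁿ(x), fⁿ(y)) > c} is infinite. Then for every ε > 0 and every n ∈ ℕ, there exists m ∈ ℕ with m > n such that for all x, y ∈ X with d(x, y) > ε, there exists i ∈ ℤ with n < |i| < m and d(fⁱ(x), fⁱ(y)) > c. -/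
/-!
The pairs at distance at least `ε` form a compact subset of `X × X`. By hypothesis each such
pair is separated by some `fⁱ` with `|i| > n`, and the conditions `c < d(fⁱ x, fⁱ y)` are open,
so finitely many indices suffice; `m` is any bound on their absolute values.
-/

open Filter Topology

theorem Equiv.Perm.continuous_zpow_s9 {X : Type*} [TopologicalSpace X] {f : Equiv.Perm X}
    (hf : Continuous f) (hf' : Continuous f.symm) (i : ℤ) : Continuous ⇑(f ^ i) := by
  induction i using Int.induction_on with
  | zero => exact continuous_id
  | succ k ih =>
    rw [zpow_add_one, Equiv.Perm.coe_mul]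
    exact ih.comp hf
  | pred k ih =>
    rw [zpow_sub_one, Equiv.Perm.coe_mul, Equiv.Perm.inv_def]
    exact ih.comp hf'

theorem Set.Infinite.exists_lt_abs {s : Set ℤ} (hs : s.Infinite) (n : ℤ) :
    ∃ i, n < |i| ∧ i ∈ s := by
  have hsmall : {i : ℤ | |i| ≤ n}.Finite :=
    (Set.finite_Icc (-n) n).subset fun _ hi => abs_le.mp hi
  obtain ⟨i, his, hi⟩ := (hs.sdiff hsmall).nonempty
  exact ⟨i, not_le.mp hi, his⟩

theorem Set.Finite.exists_abs_lt {s : Set ℤ} (hs : s.Finite) (n : ℕ) :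
    ∃ m : ℕ, n < m ∧ ∀ i ∈ s, |i| < m := by
  obtain ⟨M, hM⟩ := (hs.image Int.natAbs).bddAbove
  refine ⟨M + n + 1, by omega, fun i hi => ?_⟩
  have hiM : i.natAbs ≤ M := hM ⟨i, hi, rfl⟩
  rw [Int.abs_eq_natAbs]
  omega

theorem IsCompact.exists_abs_lt_of_subset_iUnion_dist_gt {X Y : Type*} [TopologicalSpace X]
    [MetricSpace Y] {K : Set (X × X)} (hK : IsCompact K) {g : ℤ → X → Y}
    (hg : ∀ i, Continuous (g i)) {c : ℝ} (n : ℕ)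
    (hcover : ∀ p ∈ K, ∃ i : ℤ, (n : ℤ) < |i| ∧ c < dist (g i p.1) (g i p.2)) :
    ∃ m : ℕ, n < m ∧ ∀ p ∈ K,
      ∃ i : ℤ, (n : ℤ) < |i| ∧ |i| < (m : ℤ) ∧ c < dist (g i p.1) (g i p.2) := by
  obtain ⟨t, hts, htfin, hKt⟩ := hK.elim_finite_subcover_image
    (b := {i : ℤ | (n : ℤ) < |i|}) (c := fun i => {p : X × X | c < dist (g i p.1) (g i p.2)})
    (fun i _ => isOpen_lt continuous_const
      (((hg i).comp continuous_fst).dist ((hg i).comp continuous_snd)))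
    (fun p hp => by simpa using hcover p hp)
  obtain ⟨m, hnm, hm⟩ := htfin.exists_abs_lt n
  refine ⟨m, hnm, fun p hp => ?_⟩
  obtain ⟨i, hit, hip⟩ := Set.mem_iUnion₂.mp (hKt hp)
  exact ⟨i, hts hit, hm i hit, hip⟩

theorem stmt_9_general {X : Type*} [MetricSpace X] [CompactSpace X]
    (f : X ≃ X) (hf : Continuous f) (hf' : Continuous f.symm)
    (c : ℝ)
    (h : ∀ x y : X, x ≠ y → {n : ℤ | dist ((f ^ n) x) ((f ^ n) y) > c}.Infinite) :
    ∀ ε > 0, ∀ n : ℕ, ∃ m : ℕ, m > n ∧ ∀ x y : X, dist x y > ε →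
      ∃ i : ℤ, (n : ℤ) < |i| ∧ |i| < (m : ℤ) ∧ dist ((f ^ i) x) ((f ^ i) y) > c := by
  intro ε hε n
  have hK : IsCompact {p : X × X | ε ≤ dist p.1 p.2} :=
    (isClosed_le continuous_const (continuous_fst.dist continuous_snd)).isCompact
  obtain ⟨m, hnm, hm⟩ := hK.exists_abs_lt_of_subset_iUnion_dist_gt
    (Equiv.Perm.continuous_zpow_s9 hf hf') n fun p hp =>
      (h p.1 p.2 (dist_pos.mp (hε.trans_le hp))).exists_lt_abs n
  exact ⟨m, hnm, fun x y hxy => hm (x, y) hxy.le⟩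

theorem stmt_9 {X : Type*} [MetricSpace X] [CompactSpace X]
    (f : X ≃ X) (hf : Continuous f) (hf' : Continuous f.symm)
    (c : ℝ) (hc : 0 < c)
    (h : ∀ x y : X, x ≠ y → {n : ℤ | dist ((f ^ n) x) ((f ^ n) y) > c}.Infinite) :
    ∀ ε > 0, ∀ n : ℕ, ∃ m : ℕ, m > n ∧ ∀ x y : X, dist x y > ε →
      ∃ i : ℤ, (n : ℤ) < |i| ∧ |i| < (m : ℤ) ∧ dist ((f ^ i) x) ((f ^ i) y) > c :=
  stmt_9_general f hf hf' c h
end
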